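/- On ℝ⁴ ∖ {0} with r(p) = ‖p‖, define the 1-forms E⁰(p)(v) = (p₀v₀ + p₁v₁ + p₂v₂ + p₃v₃)/r, E¹(p)(v) = (−p₁v₀ + p₀v₁ + p₃v₂ − p₂v₃)/r, E²(p)(v) = (−p₂v₀ − p₃v₁ + p₀v₂ + p₁v₃)/r, E³(p)(v) = (−p₃v₀ + p₂v₁ − p₁v₂ + p₀v₃)/r. Then for all p ∈ ℝ⁴ ∖ {0} and u, v ∈ ℝ⁴: dE⁰(p)(u,v) = 0, dE¹(p)(u,v) = (1/r)(E⁰∧E¹)(p)(u,v) − (2/r)(E²∧E³)(p)(u,v), dE²(p)(u,v) = (1/r)(E⁰∧E²)(p)(u,v) + (2/r)(E¹∧E³)(p)(u,v), and dE³(p)(u,v) = (1/r)(E⁰∧E³)(p)(u,v) − (2/r)(E¹∧E²)(p)(u,v). -/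

import Mathlib

noncomputable section

/-- Exterior derivative of a 1-form on `ℝ⁴` (Euclidean). -/
def exd (η : EuclideanSpace ℝ (Fin 4) → (EuclideanSpace ℝ (Fin 4) →L[ℝ] ℝ))
    (p u v : EuclideanSpace ℝ (Fin 4)) : ℝ :=
  (fderiv ℝ η p u) v - (fderiv ℝ η p v) u

/-- Wedge product of two 1-forms on `ℝ⁴` (Euclidean). -/
def wedge (η ξ : EuclideanSpace ℝ (Fin 4) → (EuclideanSpace ℝ (Fin 4) →L[ℝ] ℝ))
    (p u v : EuclideanSpace ℝ (Fin 4)) : ℝ :=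
  η p u * ξ p v - η p v * ξ p u

/-- The quaternionic Maurer–Cartan coframe `E⁰, E¹, E², E³` on `ℝ⁴ ∖ {0}`. -/
def E : Fin 4 → EuclideanSpace ℝ (Fin 4) → (EuclideanSpace ℝ (Fin 4) →L[ℝ] ℝ) :=
  ![fun p => (1 / ‖p‖) • (p 0 • EuclideanSpace.proj (0 : Fin 4)
      + p 1 • EuclideanSpace.proj (1 : Fin 4)
      + p 2 • EuclideanSpace.proj (2 : Fin 4)
      + p 3 • EuclideanSpace.proj (3 : Fin 4)),
    fun p => (1 / ‖p‖) • ((-p 1) • EuclideanSpace.proj (0 : Fin 4)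
      + p 0 • EuclideanSpace.proj (1 : Fin 4)
      + p 3 • EuclideanSpace.proj (2 : Fin 4)
      + (-p 2) • EuclideanSpace.proj (3 : Fin 4)),
    fun p => (1 / ‖p‖) • ((-p 2) • EuclideanSpace.proj (0 : Fin 4)
      + (-p 3) • EuclideanSpace.proj (1 : Fin 4)
      + p 0 • EuclideanSpace.proj (2 : Fin 4)
      + p 1 • EuclideanSpace.proj (3 : Fin 4)),
    fun p => (1 / ‖p‖) • ((-p 3) • EuclideanSpace.proj (0 : Fin 4)
      + p 2 • EuclideanSpace.proj (1 : Fin 4)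
      + (-p 1) • EuclideanSpace.proj (2 : Fin 4)
      + p 0 • EuclideanSpace.proj (3 : Fin 4))]

/-!
Write `Eᵃ = ‖q‖⁻¹ • Φₐ q` with `Φₐ = quatForm a` bilinear. As `d(‖q‖⁻¹) = -‖q‖⁻² E⁰`, the Leibniz
rule gives `dEᵃ(u,v) = ‖p‖⁻¹ (Φₐ(u,v) - Φₐ(v,u)) - ‖p‖⁻¹ (E⁰∧Eᵃ)(u,v)`. The form `Φ₀` is the inner
product, hence symmetric; for `(a,b,c)` a cyclic permutation of `(1,2,3)` the constant 2-form
`Φₐ(u,v) - Φₐ(v,u)` expands in the orthonormal coframe `Eᵃ(p)` as `2 (E⁰∧Eᵃ - Eᵇ∧Eᶜ)`, which is a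
polynomial identity once `‖p‖²` is written as `∑ pᵢ²`.
-/

open scoped RealInnerProductSpace

section InvNorm

variable {F : Type*} [NormedAddCommGroup F] [InnerProductSpace ℝ F] {p : F}

theorem hasFDerivAt_inv_norm (hp : p ≠ 0) :
    HasFDerivAt (fun q : F => ‖q‖⁻¹) (-(‖p‖ ^ 3)⁻¹ • innerSL ℝ p) p := by
  have hr : ‖p‖ ≠ 0 := norm_ne_zero_iff.mpr hp
  have hnorm : HasFDerivAt (fun q : F => ‖q‖) (‖p‖⁻¹ • innerSL ℝ p) p := by
    have h := (hasStrictFDerivAt_norm_sq p).hasFDerivAt.sqrt (pow_ne_zero 2 hr)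
    simp only [Real.sqrt_sq (norm_nonneg _)] at h
    refine h.congr_fderiv (ContinuousLinearMap.ext fun w => ?_)
    simp only [smul_apply, coe_innerSL_apply, nsmul_eq_mul, Nat.cast_ofNat, smul_eq_mul]
    field_simp
  refine ((hasDerivAt_inv hr).comp_hasFDerivAt p hnorm).congr_fderiv
    (ContinuousLinearMap.ext fun w => ?_)
  simp only [neg_smul, neg_apply, smul_apply, coe_innerSL_apply, smul_eq_mul]
  field_simp

theorem fderiv_inv_norm_smul_apply (Φ : F →L[ℝ] F →L[ℝ] ℝ) (hp : p ≠ 0) (u v : F) :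
    fderiv ℝ (fun q => (1 / ‖q‖) • Φ q) p u v
      = (Φ u v - ⟪p, u⟫ / ‖p‖ ^ 2 * Φ p v) / ‖p‖ := by
  have h := ((hasFDerivAt_inv_norm hp).smul Φ.hasFDerivAt).fderiv
  simp only [one_div]
  change fderiv ℝ ((fun q : F => ‖q‖⁻¹) • ⇑Φ) p u v = _
  rw [h]
  have hr : ‖p‖ ≠ 0 := norm_ne_zero_iff.mpr hp
  simp only [add_apply, smul_apply, ContinuousLinearMap.smulRight_apply, neg_smul, neg_apply,
    coe_innerSL_apply, smul_eq_mul]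
  field_simp
  ring

end InvNorm

local notation "ℝ⁴" => EuclideanSpace ℝ (Fin 4)

local notation "π" => EuclideanSpace.proj (𝕜 := ℝ)

/-- `quatForm a p v` is the `a`-th coordinate of the quaternion product `p̄ v`. -/
def quatForm : Fin 4 → (ℝ⁴ →L[ℝ] ℝ⁴ →L[ℝ] ℝ) :=
  ![(π 0).smulRight (π 0) + (π 1).smulRight (π 1) + (π 2).smulRight (π 2)
      + (π 3).smulRight (π 3),
    (-π 1).smulRight (π 0) + (π 0).smulRight (π 1) + (π 3).smulRight (π 2)
      + (-π 2).smulRight (π 3),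
    (-π 2).smulRight (π 0) + (-π 3).smulRight (π 1) + (π 0).smulRight (π 2)
      + (π 1).smulRight (π 3),
    (-π 3).smulRight (π 0) + (π 2).smulRight (π 1) + (-π 1).smulRight (π 2)
      + (π 0).smulRight (π 3)]

theorem E_eq_inv_norm_smul_quatForm (a : Fin 4) : E a = fun q => (1 / ‖q‖) • quatForm a q := by
  funext q
  ext w
  fin_cases a <;> simp [E, quatForm]

theorem E_zero_apply (p u : ℝ⁴) : E 0 p u = ⟪p, u⟫ / ‖p‖ := by
  simp only [E, Matrix.cons_val_zero, add_apply, smul_apply, PiLp.proj_apply, smul_eq_mul,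
    EuclideanSpace.inner_eq_star_dotProduct, dotProduct, Pi.star_apply, star_trivial,
    Fin.sum_univ_four]
  ring

theorem wedge_self (η : ℝ⁴ → ℝ⁴ →L[ℝ] ℝ) (p u v : ℝ⁴) : wedge η η p u v = 0 := by
  rw [wedge, mul_comm, sub_self]

theorem wedge_E (a b : Fin 4) (p u v : ℝ⁴) :
    wedge (E a) (E b) p u v
      = (quatForm a p u * quatForm b p v - quatForm a p v * quatForm b p u) / ‖p‖ ^ 2 := by
  simp only [wedge, E_eq_inv_norm_smul_quatForm, smul_apply, smul_eq_mul]
  ring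

theorem exd_of_eq_inv_norm_smul {η : ℝ⁴ → ℝ⁴ →L[ℝ] ℝ} {Φ : ℝ⁴ →L[ℝ] ℝ⁴ →L[ℝ] ℝ}
    (hη : η = fun q => (1 / ‖q‖) • Φ q) {p : ℝ⁴} (hp : p ≠ 0) (u v : ℝ⁴) :
    exd η p u v = (Φ u v - Φ v u) / ‖p‖ - wedge (E 0) η p u v / ‖p‖ := by
  subst hη
  rw [exd, wedge, fderiv_inv_norm_smul_apply Φ hp, fderiv_inv_norm_smul_apply Φ hp,
    E_zero_apply, E_zero_apply]
  simp only [smul_apply, smul_eq_mul]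
  ring

theorem quatForm_zero_comm (u v : ℝ⁴) : quatForm 0 u v = quatForm 0 v u := by
  simp only [quatForm, Matrix.cons_val_zero, add_apply, ContinuousLinearMap.smulRight_apply,
    PiLp.proj_apply, smul_apply, smul_eq_mul]
  ring

theorem norm_sq_eq_sum_four (p : ℝ⁴) : ‖p‖ ^ 2 = p 0 ^ 2 + p 1 ^ 2 + p 2 ^ 2 + p 3 ^ 2 := by
  simp only [EuclideanSpace.norm_sq_eq, Real.norm_eq_abs, sq_abs, Fin.sum_univ_four]

theorem quatForm_one_sub_swap {p : ℝ⁴} (hp : p ≠ 0) (u v : ℝ⁴) :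
    quatForm 1 u v - quatForm 1 v u
      = 2 * wedge (E 0) (E 1) p u v - 2 * wedge (E 2) (E 3) p u v := by
  have hr : ‖p‖ ^ 2 ≠ 0 := by positivity
  rw [wedge_E, wedge_E]
  field_simp
  rw [norm_sq_eq_sum_four]
  simp only [quatForm, Matrix.cons_val, Matrix.cons_val_zero, Matrix.cons_val_one, add_apply,
    ContinuousLinearMap.smulRight_apply, neg_apply, PiLp.proj_apply, neg_smul, smul_apply,
    smul_eq_mul]
  ring

theorem quatForm_two_sub_swap {p : ℝ⁴} (hp : p ≠ 0) (u v : ℝ⁴) :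
    quatForm 2 u v - quatForm 2 v u
      = 2 * wedge (E 0) (E 2) p u v + 2 * wedge (E 1) (E 3) p u v := by
  have hr : ‖p‖ ^ 2 ≠ 0 := by positivity
  rw [wedge_E, wedge_E]
  field_simp
  rw [norm_sq_eq_sum_four]
  simp only [quatForm, Matrix.cons_val, Matrix.cons_val_zero, Matrix.cons_val_one, add_apply,
    ContinuousLinearMap.smulRight_apply, neg_apply, PiLp.proj_apply, neg_smul, smul_apply,
    smul_eq_mul]
  ring

theorem quatForm_three_sub_swap {p : ℝ⁴} (hp : p ≠ 0) (u v : ℝ⁴) :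
    quatForm 3 u v - quatForm 3 v u
      = 2 * wedge (E 0) (E 3) p u v - 2 * wedge (E 1) (E 2) p u v := by
  have hr : ‖p‖ ^ 2 ≠ 0 := by positivity
  rw [wedge_E, wedge_E]
  field_simp
  rw [norm_sq_eq_sum_four]
  simp only [quatForm, Matrix.cons_val, Matrix.cons_val_zero, Matrix.cons_val_one, add_apply,
    ContinuousLinearMap.smulRight_apply, neg_apply, PiLp.proj_apply, neg_smul, smul_apply,
    smul_eq_mul]
  ring

/-- The structure equations of the quaternionic Maurer–Cartan coframe on
`ℝ⁴ ∖ {0}`: `dE⁰ = 0`, `dE¹ = (1/r)E⁰∧E¹ − (2/r)E²∧E³`,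
`dE² = (1/r)E⁰∧E² + (2/r)E¹∧E³`, `dE³ = (1/r)E⁰∧E³ − (2/r)E¹∧E²`. -/
theorem maurer_cartan_structure_equations (p : EuclideanSpace ℝ (Fin 4))
    (hp : p ≠ 0) (u v : EuclideanSpace ℝ (Fin 4)) :
    exd (E 0) p u v = 0 ∧
    exd (E 1) p u v = (1 / ‖p‖) * wedge (E 0) (E 1) p u v
      - (2 / ‖p‖) * wedge (E 2) (E 3) p u v ∧
    exd (E 2) p u v = (1 / ‖p‖) * wedge (E 0) (E 2) p u v
      + (2 / ‖p‖) * wedge (E 1) (E 3) p u v ∧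
    exd (E 3) p u v = (1 / ‖p‖) * wedge (E 0) (E 3) p u v
      - (2 / ‖p‖) * wedge (E 1) (E 2) p u v := by
  simp only [exd_of_eq_inv_norm_smul (E_eq_inv_norm_smul_quatForm _) hp]
  refine ⟨?_, ?_, ?_, ?_⟩
  · rw [quatForm_zero_comm u v, wedge_self]
    ring
  · rw [quatForm_one_sub_swap hp]
    ring
  · rw [quatForm_two_sub_swap hp]
    ring
  · rw [quatForm_three_sub_swap hp]
    ring

end
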